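/- For a linear d-web (all V_k = 0) presented by F = a_0 p^d + ... + a_d, the nonzero coefficients of the system M(d) satisfy u_d = u_{d−1}^1 = ... = u_3^{d−3} = ∂_x(a_0)/a_0 + ∂_y(a_1/a_0) and u_{d−1} = u_{d−2}^1 = ... = u_2^{d−3} = ∂_y(a_0)/a_0, where u_j^i denote the coefficients of the associated polynomials U_i. -/

import Mathlib

open Polynomial

/-- Coefficientwise application of a derivation `δ` of `O` to a polynomial in `O[X]`. -/
noncomputable def cderiv {O : Type*} [CommRing O] (δ : O → O) (f : O[X]) : O[X] :=
  f.sum fun n a => C (δ a) * X ^ n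

/-- The Sylvester matrix of `f` (degree `n`) and `g` (degree `m`); its determinant
is the resultant of `f` and `g`. -/
noncomputable def sylvester {O : Type*} [CommRing O] (f g : O[X]) (n m : ℕ) :
    Matrix (Fin (m + n)) (Fin (m + n)) O :=
  Matrix.of fun i j =>
    if (i : ℕ) < m then
      (if (i : ℕ) ≤ (j : ℕ) ∧ (j : ℕ) ≤ (i : ℕ) + n then f.coeff (n - ((j : ℕ) - (i : ℕ))) else 0)
    else
      (if (i : ℕ) - m ≤ (j : ℕ) ∧ (j : ℕ) ≤ (i : ℕ) - m + m then
        g.coeff (m - ((j : ℕ) - ((i : ℕ) - m))) else 0)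

lemma cderiv_coeff {O : Type*} [CommRing O] (δ : O → O) (h0 : δ 0 = 0) (f : O[X]) (n : ℕ) :
    (cderiv δ f).coeff n = δ (f.coeff n) := by
  unfold cderiv
  rw [Polynomial.sum, finset_sum_coeff]
  simp only [coeff_C_mul, coeff_X_pow, mul_ite, mul_one, mul_zero]
  rw [Finset.sum_ite_eq f.support n (fun k => δ (f.coeff k))]
  by_cases hn : n ∈ f.support
  · simp [hn]
  · simp [hn, Polynomial.notMem_support_iff.mp hn, h0]

lemma coeff_mul_single {O : Type*} [CommRing O] (p q : O[X]) (j d : ℕ)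
    (hp : ∀ t, j < t → p.coeff t = 0) (hq : ∀ t, d < t → q.coeff t = 0) :
    (p * q).coeff (j + d) = p.coeff j * q.coeff d := by
  rw [coeff_mul]
  rw [Finset.sum_eq_single (j, d)]
  · intro x hx hne
    have hsum : x.1 + x.2 = j + d := Finset.HasAntidiagonal.mem_antidiagonal.mp hx
    rcases lt_or_ge j x.1 with h | h
    · rw [hp _ h, zero_mul]
    · have hne' : x.1 ≠ j ∨ x.2 ≠ d := by
        by_contra hc
        push_neg at hc
        exact hne (Prod.ext_iff.mpr hc)
      have : d < x.2 := by omega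
      rw [hq _ this, mul_zero]
  · intro h
    exact (h (Finset.HasAntidiagonal.mem_antidiagonal.mpr rfl)).elim

lemma coeff_mul_pair {O : Type*} [CommRing O] (p q : O[X]) (j d : ℕ) (hd : 1 ≤ d)
    (hp : ∀ t, j + 1 < t → p.coeff t = 0) (hq : ∀ t, d < t → q.coeff t = 0) :
    (p * q).coeff (j + d) = p.coeff j * q.coeff d + p.coeff (j + 1) * q.coeff (d - 1) := by
  rw [coeff_mul]
  have h1 : ((j, d) : ℕ × ℕ) ∈ Finset.HasAntidiagonal.antidiagonal (j + d) := Finset.HasAntidiagonal.mem_antidiagonal.mpr rfl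
  have h2 : ((j + 1, d - 1) : ℕ × ℕ) ∈
      (Finset.HasAntidiagonal.antidiagonal (j + d)).erase (j, d) := by
    refine Finset.mem_erase.mpr ⟨?_, Finset.HasAntidiagonal.mem_antidiagonal.mpr (by omega)⟩
    intro hc
    have := congrArg Prod.fst hc
    simp at this
  rw [← Finset.add_sum_erase _ _ h1, ← Finset.add_sum_erase _ _ h2]
  have hz : ∀ x ∈ ((Finset.HasAntidiagonal.antidiagonal (j + d)).erase (j, d)).erase (j + 1, d - 1),
      p.coeff x.1 * q.coeff x.2 = 0 := by
    intro x hx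
    have hne2 : x ≠ (j + 1, d - 1) := (Finset.mem_erase.mp hx).1
    have hx' := (Finset.mem_erase.mp hx).2
    have hne1 : x ≠ (j, d) := (Finset.mem_erase.mp hx').1
    have hsum : x.1 + x.2 = j + d := Finset.HasAntidiagonal.mem_antidiagonal.mp (Finset.mem_erase.mp hx').2
    rcases lt_or_ge (j + 1) x.1 with h | h
    · rw [hp _ h, zero_mul]
    · have hne1' : x.1 ≠ j ∨ x.2 ≠ d := by
        by_contra hc; push_neg at hc; exact hne1 (Prod.ext_iff.mpr hc)
      have hne2' : x.1 ≠ j + 1 ∨ x.2 ≠ d - 1 := by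
        by_contra hc; push_neg at hc; exact hne2 (Prod.ext_iff.mpr hc)
      have : d < x.2 := by omega
      rw [hq _ this, mul_zero]
  rw [Finset.sum_eq_zero hz, add_zero]

/-- Coefficients of the system `M(d)` for a linear web.
For a linear `d`-web (`V_i = 0` for all `0 ≤ i ≤ d − 3`) presented by
`F = a_0 p^d + ⋯ + a_d`, writing `U_i = u_2^i p^{d−2} + ⋯ + u_d^i` (so that
`u_j^i = coeff (d − j) (U_i)`), one has
`u_d = u_{d−1}^1 = ⋯ = u_3^{d−3} = ∂_x(a_0)/a_0 + ∂_y(a_1/a_0)` and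
`u_{d−1} = u_{d−2}^1 = ⋯ = u_2^{d−3} = ∂_y(a_0)/a_0`. -/
theorem statement13 {O : Type*} [CommRing O] (dx dy : Derivation ℤ O O)
    (d : ℕ) (hd : 3 ≤ d) (F : O[X]) (hdeg : F.natDegree = d)
    (a0' : O) (ha0 : F.leadingCoeff * a0' = 1)
    (hres : IsUnit (_root_.sylvester F (derivative F) d (d - 1)).det)
    (U : ℕ → O[X])
    (hU : ∀ i ≤ d - 3, (U i).natDegree ≤ d - 2)
    (hlin : ∀ i ≤ d - 3,
      X ^ i * (cderiv (dx ·) F + X * cderiv (dy ·) F) = U i * F) :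
    ∀ i ≤ d - 3,
      (U i).coeff i = dx F.leadingCoeff * a0' + dy (F.coeff (d - 1) * a0') ∧
      (U i).coeff (i + 1) = dy F.leadingCoeff * a0' := by
  intro i hi
  set G : O[X] := cderiv (dx ·) F + X * cderiv (dy ·) F with hGdef
  have hL : F.leadingCoeff = F.coeff d := by rw [Polynomial.leadingCoeff, hdeg]
  have ha0' : F.coeff d * a0' = 1 := by rw [← hL]; exact ha0
  have hFc : ∀ t, d < t → F.coeff t = 0 := fun t ht =>
    coeff_eq_zero_of_natDegree_lt (by omega)
  have hGc : ∀ n : ℕ, G.coeff (n + 1) = dx (F.coeff (n + 1)) + dy (F.coeff n) := by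
    intro n
    rw [hGdef, coeff_add, coeff_X_mul,
      cderiv_coeff _ (map_zero dx) F, cderiv_coeff _ (map_zero dy) F]
  have hG0 : ∀ m, d + 2 ≤ m → G.coeff m = 0 := by
    intro m hm
    obtain ⟨n, rfl⟩ : ∃ n, m = n + 1 := ⟨m - 1, by omega⟩
    rw [hGc n, hFc _ (by omega), hFc _ (by omega), map_zero, map_zero, add_zero]
  have key : ∀ m, (U i * F).coeff m = (X ^ i * G).coeff m := fun m => by
    rw [← hlin i hi]
  -- vanishing of higher coefficients of U i
  have hA : ∀ k, ∀ j, i + 2 ≤ j → d - 1 - k ≤ j → (U i).coeff j = 0 := by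
    intro k
    induction k with
    | zero =>
      intro j h1 h2
      exact coeff_eq_zero_of_natDegree_lt (lt_of_le_of_lt (hU i hi) (by omega))
    | succ k ih =>
      intro j h1 h2
      rcases le_or_gt (d - 1 - k) j with h | h
      · exact ih j h1 h
      · have hp : ∀ t, j < t → (U i).coeff t = 0 := fun t ht =>
          ih t (by omega) (by omega)
        have e := key (j + d)
        rw [coeff_mul_single (U i) F j d hp hFc] at e
        have hx : (X ^ i * G).coeff (j + d) = 0 := by
          have h' := coeff_X_pow_mul G i (j + d - i)
          rw [show j + d - i + i = j + d by omega] at h'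
          rw [h', hG0 _ (by omega)]
        rw [hx] at e
        calc (U i).coeff j = (U i).coeff j * (F.coeff d * a0') := by rw [ha0', mul_one]
          _ = ((U i).coeff j * F.coeff d) * a0' := by ring
          _ = 0 := by rw [e, zero_mul]
  have hzero : ∀ t, i + 1 < t → (U i).coeff t = 0 := fun t ht =>
    hA d t (by omega) (by omega)
  -- coefficient at (i+1) + d
  have e1 : (U i).coeff (i + 1) * F.coeff d = dy (F.coeff d) := by
    have e := key (i + 1 + d)
    rw [coeff_mul_single (U i) F (i + 1) d hzero hFc] at e
    have hx : (X ^ i * G).coeff (i + 1 + d) = G.coeff (d + 1) := by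
      have h' := coeff_X_pow_mul G i (d + 1)
      rw [show d + 1 + i = i + 1 + d by omega] at h'
      exact h'
    rw [hx, hGc d, hFc (d + 1) (by omega), map_zero, zero_add] at e
    exact e
  -- coefficient at i + d
  have e2 : (U i).coeff i * F.coeff d + (U i).coeff (i + 1) * F.coeff (d - 1)
      = dx (F.coeff d) + dy (F.coeff (d - 1)) := by
    have e := key (i + d)
    rw [coeff_mul_pair (U i) F i d (by omega) hzero hFc] at e
    have hx : (X ^ i * G).coeff (i + d) = G.coeff d := by
      have h' := coeff_X_pow_mul G i d
      rw [show d + i = i + d by omega] at h'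
      exact h'
    have hgd : G.coeff d = dx (F.coeff d) + dy (F.coeff (d - 1)) := by
      have h' := hGc (d - 1)
      rw [show d - 1 + 1 = d by omega] at h'
      exact h'
    rw [hx, hgd] at e
    exact e
  have e1' : (U i).coeff (i + 1) = dy (F.coeff d) * a0' := by
    linear_combination a0' * e1 + (- (U i).coeff (i + 1)) * ha0'
  have h2 : F.coeff d * dy a0' + a0' * dy (F.coeff d) = 0 := by
    have h := dy.leibniz (F.coeff d) a0'
    rw [ha0', Derivation.map_one_eq_zero, smul_eq_mul, smul_eq_mul] at h
    linear_combination -h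
  constructor
  · rw [hL, dy.leibniz, smul_eq_mul, smul_eq_mul]
    linear_combination a0' * e2 - (U i).coeff i * ha0' - F.coeff (d - 1) * a0' * e1'
      - F.coeff (d - 1) * a0' * h2 + F.coeff (d - 1) * dy a0' * ha0'
  · rw [hL]
    exact e1'
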